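/- Let p > 4, s ∈ ℝ and t > 0, and let ψ_s(t) = |s + √t|^p + |s − √t|^p. Then ψ_s''(t) ≥ (3p(p−1)(p−2)(p−3)/64) |s|^{p−4}; equivalently, the function t ↦ ψ_s(t) − (3p(p−1)(p−2)(p−3)/128) |s|^{p−4} t² is convex on (0, ∞). -/

import Mathlib

/-!
Write `x = √t` and `f(x) = |s + x|^p + |s - x|^p`, so that `ψ_s(t) = f(x)` and
`ψ_s''(t) = (x f''(x) - f'(x)) / (4x³)`. The numerator `g = x f'' - f'` vanishes at `0`, and
`g'(x) = x f'''(x) = p(p-1)(p-2) x (|s+x|^{p-4}(s+x) - |s-x|^{p-4}(s-x))`. For `s ≥ 0` (the case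
`s < 0` is symmetric) the bracket is at least `(p-3)|s|^{p-4} x`: bound `(s+x)^{p-3}` below by its
tangent line at `s`, and `|s-x|^{p-4}(s-x)` above by `s^{p-3}`, as `y ↦ |y|^{p-4} y` is increasing.
Hence `g(x) ≥ p(p-1)(p-2)(p-3)|s|^{p-4} x³/3`, which bounds `ψ_s''` below; convexity of
`ψ_s(t) - c t²` is the second-derivative test.
-/

open Real Set

section Calculus

variable {f f' f'' : ℝ → ℝ} {U : Set ℝ}

theorem deriv_deriv_eq_of_hasDerivAt (hU : IsOpen U) (hf : ∀ x ∈ U, HasDerivAt f (f' x) x)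
    {x a : ℝ} (hx : x ∈ U) (hf' : HasDerivAt f' a x) : deriv (deriv f) x = a := by
  have hderiv : deriv f =ᶠ[nhds x] f' :=
    Filter.eventually_of_mem (hU.mem_nhds hx) fun y hy => (hf y hy).deriv
  rw [hderiv.deriv_eq, hf'.deriv]

theorem convexOn_sub_mul_sq (hU : IsOpen U) (hUc : Convex ℝ U)
    (hf : ∀ x ∈ U, HasDerivAt f (f' x) x) (hf' : ∀ x ∈ U, HasDerivAt f' (f'' x) x) {c : ℝ}
    (hc : ∀ x ∈ U, 2 * c ≤ f'' x) :
    ConvexOn ℝ U (fun x => f x - c * x ^ 2) := by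
  have hsq (x : ℝ) : HasDerivAt (fun x => c * x ^ 2) (c * (2 * x)) x := by
    simpa using (hasDerivAt_pow 2 x).const_mul c
  have hlin (x : ℝ) : HasDerivAt (fun x => c * (2 * x)) (c * 2) x := by
    simpa using ((hasDerivAt_id x).const_mul 2).const_mul c
  refine convexOn_of_hasDerivWithinAt2_nonneg (f' := fun x => f' x - c * (2 * x))
    (f'' := fun x => f'' x - c * 2) hUc
    (fun x hx => ((hf x hx).sub (hsq x)).continuousAt.continuousWithinAt) ?_ ?_ ?_
  · rw [hU.interior_eq]
    exact fun x hx => ((hf x hx).sub (hsq x)).hasDerivWithinAt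
  · rw [hU.interior_eq]
    exact fun x hx => ((hf' x hx).sub (hlin x)).hasDerivWithinAt
  · rw [hU.interior_eq]
    exact fun x hx => by linarith [hc x hx]

theorem mul_pow_three_div_three_le_sub_of_hasDerivAt {g g' : ℝ → ℝ}
    (hg : ∀ y, 0 ≤ y → HasDerivAt g (g' y) y) {k : ℝ} (hg' : ∀ y, 0 < y → k * y ^ 2 ≤ g' y)
    {x : ℝ} (hx : 0 ≤ x) : k * x ^ 3 / 3 ≤ g x - g 0 := by
  have hcube (y : ℝ) : HasDerivAt (fun y => k * y ^ 3 / 3) (k * y ^ 2) y := by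
    refine (((hasDerivAt_pow 3 y).const_mul k).div_const 3).congr_deriv ?_
    push_cast
    ring
  have hmono : MonotoneOn (fun y => g y - k * y ^ 3 / 3) (Ici 0) := by
    refine monotoneOn_of_hasDerivWithinAt_nonneg (f' := fun y => g' y - k * y ^ 2) (convex_Ici 0)
      (fun y hy => ((hg y hy).sub (hcube y)).continuousAt.continuousWithinAt) ?_ ?_ <;>
      rw [interior_Ici]
    · exact fun y hy => ((hg y (le_of_lt hy)).sub (hcube y)).hasDerivWithinAt
    · exact fun y hy => sub_nonneg.2 (hg' y hy)
  have := hmono self_mem_Ici hx hx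
  simp only at this
  linarith

theorem HasDerivAt.comp_sqrt {a u : ℝ} (hf : HasDerivAt f a (√u)) (hu : 0 < u) :
    HasDerivAt (fun v => f (√v)) (a / (2 * √u)) u := by
  refine (hf.comp u (hasDerivAt_sqrt hu.ne')).congr_deriv ?_
  ring

theorem HasDerivAt.comp_sqrt_div_two_sqrt {a u : ℝ} (hf : HasDerivAt f a (√u)) (hu : 0 < u) :
    HasDerivAt (fun v => f (√v) / (2 * √v)) ((√u * a - f (√u)) / (4 * √u ^ 3)) u := by
  refine ((hf.comp_sqrt hu).div ((hasDerivAt_sqrt hu.ne').const_mul 2)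
    (by positivity)).congr_deriv ?_
  field_simp
  ring

end Calculus

theorem hasDerivAt_abs_rpow_mul_self {q : ℝ} (hq : 1 < q) (y : ℝ) :
    HasDerivAt (fun z => |z| ^ q * z) ((q + 1) * |y| ^ q) y := by
  refine ((hasDerivAt_abs_rpow y hq).mul (hasDerivAt_id y)).congr_deriv ?_
  have hsplit : |y| ^ q = |y| ^ (q - 2) * |y| ^ (2 : ℝ) := by
    rw [← rpow_add' (abs_nonneg y) (by linarith), sub_add_cancel]
  rw [hsplit, rpow_two, sq_abs, id]
  ring

theorem abs_rpow_mul_self_le {r y s : ℝ} (hr : 0 ≤ r) (hs : 0 ≤ s) (hys : y ≤ s) :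
    |y| ^ r * y ≤ s ^ r * s := by
  rcases le_total y 0 with hy | hy
  · exact (mul_nonpos_of_nonneg_of_nonpos (by positivity) hy).trans (by positivity)
  · rw [abs_of_nonneg hy]
    exact mul_le_mul (rpow_le_rpow hy hys hr) hys hy (by positivity)

theorem rpow_add_one_add_mul_le {r s x : ℝ} (hr : 0 < r) (hs : 0 ≤ s) (hx : 0 ≤ x) :
    s ^ (r + 1) + (r + 1) * s ^ r * x ≤ (s + x) ^ (r + 1) := by
  rcases hs.eq_or_lt with rfl | hs
  · rw [zero_rpow (by linarith), zero_rpow hr.ne', zero_add]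
    simp only [mul_zero, zero_mul, zero_add]
    positivity
  have hbern := one_add_mul_self_le_rpow_one_add (s := x / s) (by
    have : 0 ≤ x / s := by positivity
    linarith) (p := r + 1) (by linarith)
  have hscale := mul_le_mul_of_nonneg_right hbern (by positivity : 0 ≤ s ^ (r + 1))
  calc s ^ (r + 1) + (r + 1) * s ^ r * x = (1 + (r + 1) * (x / s)) * s ^ (r + 1) := by
        rw [rpow_add_one hs.ne']
        field_simp
    _ ≤ (1 + x / s) ^ (r + 1) * s ^ (r + 1) := hscale
    _ = (s + x) ^ (r + 1) := by
        rw [← mul_rpow (by positivity) hs.le]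
        field_simp

section AbsPow

variable {r : ℝ} (s : ℝ)

noncomputable def absPowSum (r s x : ℝ) : ℝ := |s + x| ^ r + |s - x| ^ r

noncomputable def absPowDiff (r s x : ℝ) : ℝ := |s + x| ^ r * (s + x) - |s - x| ^ r * (s - x)

theorem hasDerivAt_absPowSum (hr : 1 < r) (x : ℝ) :
    HasDerivAt (absPowSum r s) (r * absPowDiff (r - 2) s x) x := by
  have hplus := (hasDerivAt_abs_rpow (s + x) hr).comp x ((hasDerivAt_id x).const_add s)
  have hminus := (hasDerivAt_abs_rpow (s - x) hr).comp x ((hasDerivAt_id x).const_sub s)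
  refine (hplus.add hminus).congr_deriv ?_
  simp only [absPowDiff]
  ring

theorem hasDerivAt_absPowDiff (hr : 1 < r) (x : ℝ) :
    HasDerivAt (absPowDiff r s) ((r + 1) * absPowSum r s x) x := by
  have hplus := (hasDerivAt_abs_rpow_mul_self hr (s + x)).comp x ((hasDerivAt_id x).const_add s)
  have hminus := (hasDerivAt_abs_rpow_mul_self hr (s - x)).comp x ((hasDerivAt_id x).const_sub s)
  refine (hplus.sub hminus).congr_deriv ?_
  simp only [absPowSum]
  ring

theorem absPowDiff_zero : absPowDiff r s 0 = 0 := by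
  simp [absPowDiff]

theorem absPowDiff_neg_left (x : ℝ) : absPowDiff r (-s) x = absPowDiff r s x := by
  rw [absPowDiff, absPowDiff, show -s + x = -(s - x) by ring, show -s - x = -(s + x) by ring,
    abs_neg, abs_neg]
  ring

theorem mul_abs_rpow_mul_le_absPowDiff (hr : 0 < r) {x : ℝ} (hx : 0 ≤ x) :
    (r + 1) * |s| ^ r * x ≤ absPowDiff r s x := by
  wlog hs : 0 ≤ s generalizing s
  · simpa [absPowDiff_neg_left] using this (-s) (by linarith)
  have hplus := rpow_add_one_add_mul_le hr hs hx
  have hminus := abs_rpow_mul_self_le (y := s - x) hr.le hs (by linarith)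
  rw [rpow_add_one' hs (by linarith), rpow_add_one' (by linarith) (by linarith)] at hplus
  rw [absPowDiff, abs_of_nonneg hs, abs_of_nonneg (by linarith : 0 ≤ s + x)]
  linarith

theorem mul_pow_three_le_mul_absPowSum_sub_absPowDiff (hr : 2 < r) {x : ℝ} (hx : 0 ≤ x) :
    (r + 1) * r * (r - 1) * |s| ^ (r - 2) * x ^ 3 / 3 ≤
      (r + 1) * x * absPowSum r s x - absPowDiff r s x := by
  have hg (y : ℝ) : HasDerivAt (fun y => (r + 1) * y * absPowSum r s y - absPowDiff r s y)
      ((r + 1) * r * (y * absPowDiff (r - 2) s y)) y := by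
    refine ((((hasDerivAt_id y).const_mul (r + 1)).mul (hasDerivAt_absPowSum s (by linarith) y)).sub
      (hasDerivAt_absPowDiff s (by linarith) y)).congr_deriv ?_
    simp only [id]
    ring
  have hg' (y : ℝ) (hy : 0 < y) :
      (r + 1) * r * (r - 1) * |s| ^ (r - 2) * y ^ 2 ≤
        (r + 1) * r * (y * absPowDiff (r - 2) s y) := by
    have hD := mul_le_mul_of_nonneg_left (mul_abs_rpow_mul_le_absPowDiff s (r := r - 2)
      (by linarith) hy.le) hy.le
    have hcoef : 0 ≤ (r + 1) * r := by nlinarith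
    calc (r + 1) * r * (r - 1) * |s| ^ (r - 2) * y ^ 2
        = (r + 1) * r * (y * ((r - 2 + 1) * |s| ^ (r - 2) * y)) := by ring
      _ ≤ (r + 1) * r * (y * absPowDiff (r - 2) s y) := mul_le_mul_of_nonneg_left hD hcoef
  simpa [absPowDiff_zero] using
    mul_pow_three_div_three_le_sub_of_hasDerivAt (fun y _ => hg y) hg' hx

-- The argument gives the larger constant `p(p-1)(p-2)(p-3)/12` in place of `3p(p-1)(p-2)(p-3)/64`.
theorem le_mul_absPowSum_sub_absPowDiff_div_pow_three {p : ℝ} (hp : 4 < p) {x : ℝ} (hx : 0 < x) :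
    3 * p * (p - 1) * (p - 2) * (p - 3) / 64 * |s| ^ (p - 4) ≤
      (x * (p * ((p - 2 + 1) * absPowSum (p - 2) s x)) - p * absPowDiff (p - 2) s x) /
        (4 * x ^ 3) := by
  have hkey := mul_pow_three_le_mul_absPowSum_sub_absPowDiff s (r := p - 2) (by linarith) hx.le
  simp only [show p - 2 + 1 = p - 1 by ring, show p - 2 - 1 = p - 3 by ring,
    show p - 2 - 2 = p - 4 by ring] at hkey ⊢
  have hpos : 0 ≤ p * (p - 1) * (p - 2) * (p - 3) * |s| ^ (p - 4) * x ^ 3 := by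
    have : 0 < p - 3 := by linarith
    have : 0 < p - 2 := by linarith
    have : 0 < p - 1 := by linarith
    positivity
  rw [le_div_iff₀ (by positivity)]
  nlinarith [mul_le_mul_of_nonneg_left hkey (by linarith : 0 ≤ p)]

end AbsPow

/-- **Lower bound on `ψ_s''` for `p > 4`** (Lemma 2.3):
`ψ_s''(t) ≥ 3p(p−1)(p−2)(p−3)/64 · |s|^{p−4}`; equivalently, the function
`t ↦ ψ_s(t) − 3p(p−1)(p−2)(p−3)/128 · |s|^{p−4} t²` is convex on `(0, ∞)`. -/
theorem psi_second_deriv_ge_of_four_lt (p : ℝ) (hp : 4 < p) (s t : ℝ) (ht : 0 < t) :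
    deriv (deriv (fun u : ℝ => |s + Real.sqrt u| ^ p + |s - Real.sqrt u| ^ p)) t ≥
        3 * p * (p - 1) * (p - 2) * (p - 3) / 64 * |s| ^ (p - 4) ∧
      ConvexOn ℝ (Set.Ioi (0 : ℝ))
        (fun u : ℝ => |s + Real.sqrt u| ^ p + |s - Real.sqrt u| ^ p -
          3 * p * (p - 1) * (p - 2) * (p - 3) / 128 * |s| ^ (p - 4) * u ^ 2) := by
  have hψ (u : ℝ) (hu : u ∈ Ioi 0) : HasDerivAt (fun u => |s + √u| ^ p + |s - √u| ^ p)
      (p * absPowDiff (p - 2) s √u / (2 * √u)) u :=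
    (hasDerivAt_absPowSum s (by linarith) √u).comp_sqrt hu
  have hψ' (u : ℝ) (hu : u ∈ Ioi 0) : HasDerivAt (fun u => p * absPowDiff (p - 2) s √u / (2 * √u))
      ((√u * (p * ((p - 2 + 1) * absPowSum (p - 2) s √u)) - p * absPowDiff (p - 2) s √u) /
        (4 * √u ^ 3)) u :=
    ((hasDerivAt_absPowDiff s (by linarith) √u).const_mul p).comp_sqrt_div_two_sqrt hu
  have hbound (u : ℝ) (hu : u ∈ Ioi 0) := le_mul_absPowSum_sub_absPowDiff_div_pow_three s hp
    (sqrt_pos.2 hu)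
  refine ⟨?_, ?_⟩
  · rw [deriv_deriv_eq_of_hasDerivAt isOpen_Ioi hψ ht (hψ' t ht)]
    exact hbound t ht
  · refine convexOn_sub_mul_sq isOpen_Ioi (convex_Ioi 0) hψ hψ' fun u hu => ?_
    linarith [hbound u hu]
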